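/- arXiv:1309.1661 — 3 statements merged into one kernel-verified Lean document; each statement's English description precedes it below -/
import Mathlib

section
/- Let ℓ be a prime number, G a finite group whose order is not divisible by ℓ, and C_ℓ = ℤ/ℓℤ. Let N be a module over ℤ[1/ℓ][C_ℓ × G] whose underlying ℤ[G]-module is cohomologically trivial. Then the submodule N^{C_ℓ} of C_ℓ-invariants is cohomologically trivial as a ℤ[G]-module. -/
/-!
Since `ℓ` acts invertibly on `N`, the averaging operator `v ↦ ℓ⁻¹ ∑_{σ ∈ C_ℓ} σ v` is a
`G`-equivariant retraction of `N` onto `N^{C_ℓ}`, so `N^{C_ℓ}` is a retract of `N` in `Rep ℤ G`.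
Restriction to a subgroup followed by `Hⁱ` is a functor, hence carries this retract to a retract,
and a retract of a zero object is zero.
-/

open CategoryTheory

section InvariantsRep

variable {R : Type} [CommSemiring R] {H G : Type} [Group H] [Group G]
variable {V : Type} [AddCommMonoid V] [Module R V]

/-- The submodule of `H`-invariants of a representation of a product group `H × G`. -/
noncomputable def fstInvariants (ρ : Representation R (H × G) V) : Submodule R V :=
  { carrier := Set.ofPred fun v => ∀ h : H, (MonoidHom.comp ρ (MonoidHom.inl H G)) h v = v
    zero_mem' := fun h => by simp only [map_zero]
    add_mem' := fun hv hw h => by simp only [hv h, hw h, map_add]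
    smul_mem' := fun r v hv h => by simp only [hv h, map_smulₛₗ, RingHom.id_apply] }

lemma fstInvariants_stable (ρ : Representation R (H × G) V) (g : G) :
    ∀ v ∈ fstInvariants ρ, ρ (1, g) v ∈ fstInvariants ρ := by
  intro v hv h
  have h1 : ρ (h, 1) v = v := hv h
  have h2 : ((h, (1 : G)) : H × G) * ((1 : H), g) = ((1 : H), g) * (h, 1) := by
    simp [Prod.ext_iff]
  show ρ (h, 1) (ρ (1, g) v) = ρ (1, g) v
  rw [← Module.End.mul_apply, ← map_mul, h2, map_mul, Module.End.mul_apply, h1]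

/-- The representation of `G` on the `H`-invariants of a representation of `H × G`. -/
noncomputable def fstInvariantsRep (ρ : Representation R (H × G) V) :
    Representation R G (fstInvariants ρ) where
  toFun g := LinearMap.restrict (ρ (1, g)) (fstInvariants_stable ρ g)
  map_one' := by
    ext v
    show (ρ ((1 : H), (1 : G))) v = v
    rw [show ((1 : H), (1 : G)) = (1 : H × G) from rfl, map_one]
    rfl
  map_mul' g₁ g₂ := by
    ext v
    show (ρ ((1 : H), g₁ * g₂)) v = ρ (1, g₁) (ρ (1, g₂) v)
    rw [← Module.End.mul_apply, ← map_mul]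
    congr 1
    simp [Prod.ext_iff]

end InvariantsRep

/-- A `ℤ[G]`-module `M` (formalized as `M : Rep ℤ G`) is *cohomologically trivial* if for
every subgroup `H` of `G` and every `i > 0`, the group cohomology `Hⁱ(H, M)` of the
restriction of `M` to `H` vanishes. -/
def IsCohomologicallyTrivial {G : Type} [Group G] (M : Rep ℤ G) : Prop :=
  ∀ (H : Subgroup G) (i : ℕ), 0 < i →
    Limits.IsZero
      (groupCohomology (Rep.res H.subtype M) i)

namespace Module.End

variable {k V : Type*} [CommSemiring k] [AddCommMonoid V] [Module k V] {c : k}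

noncomputable abbrev smulUnit (hc : Function.Bijective fun v : V => c • v) : (Module.End k V)ˣ :=
  ((isUnit_iff (c • LinearMap.id)).2 hc).unit

lemma commute_smulUnit_inv (hc : Function.Bijective fun v : V => c • v) (f : Module.End k V) :
    Commute ↑(smulUnit hc)⁻¹ f :=
  Commute.units_inv_left ((Commute.one_left f).smul_left c)

end Module.End

namespace Representation

variable {k H G V : Type} [CommRing k] [Group H] [Fintype H] [Group G]
  [AddCommGroup V] [Module k V] (ρ : Representation k (H × G) V)

lemma norm_inl_mem_fstInvariants (v : V) :
    norm (ρ.comp (MonoidHom.inl H G)) v ∈ fstInvariants ρ :=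
  fun h => self_norm_apply _ h v

lemma norm_inl_apply_of_mem_fstInvariants {v : V} (hv : v ∈ fstInvariants ρ) :
    norm (ρ.comp (MonoidHom.inl H G)) v = (Fintype.card H : k) • v := by
  simp only [norm, LinearMap.coe_sum, Finset.sum_apply, hv _, Finset.sum_const,
    Finset.card_univ, Nat.cast_smul_eq_nsmul]

lemma commute_inr_norm_inl (g : G) :
    Commute (ρ (1, g)) (norm (ρ.comp (MonoidHom.inl H G))) :=
  Commute.sum_right _ _ _ fun h _ => ((MonoidHom.commute_inl_inr h g).symm.map ρ :)

variable (hcard : Function.Bijective fun v : V => (Fintype.card H : k) • v)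

noncomputable def fstAverage : Module.End k V :=
  ↑(Module.End.smulUnit hcard)⁻¹ * norm (ρ.comp (MonoidHom.inl H G))

lemma fstAverage_mem_fstInvariants (v : V) : fstAverage ρ hcard v ∈ fstInvariants ρ := fun h => by
  change (ρ (h, 1) * ↑(Module.End.smulUnit hcard)⁻¹) _ = _
  rw [(Module.End.commute_smulUnit_inv hcard _).symm.eq, Module.End.mul_apply]
  exact congrArg _ (norm_inl_mem_fstInvariants ρ v h)

lemma commute_inr_fstAverage (g : G) : Commute (ρ (1, g)) (fstAverage ρ hcard) :=
  (Module.End.commute_smulUnit_inv hcard _).symm.mul_right (commute_inr_norm_inl ρ g)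

lemma fstAverage_apply_of_mem {v : V} (hv : v ∈ fstInvariants ρ) : fstAverage ρ hcard v = v := by
  rw [fstAverage, Module.End.mul_apply, norm_inl_apply_of_mem_fstInvariants ρ hv]
  change ((↑(Module.End.smulUnit hcard)⁻¹ * ↑(Module.End.smulUnit hcard) : Module.End k V)) v = v
  rw [Units.inv_mul, Module.End.one_apply]

noncomputable def fstInvariantsRetract :
    Retract (Rep.of (fstInvariantsRep ρ)) (Rep.of (ρ.comp (MonoidHom.inr H G))) where
  i := Rep.ofHom ⟨(fstInvariants ρ).subtype, fun _ => rfl⟩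
  r := Rep.ofHom
    ⟨(fstAverage ρ hcard).codRestrict (fstInvariants ρ) (fstAverage_mem_fstInvariants ρ hcard),
      fun g => LinearMap.ext fun v => Subtype.ext
        (LinearMap.congr_fun (commute_inr_fstAverage ρ hcard g).eq.symm v)⟩
  retract := by
    ext v
    exact fstAverage_apply_of_mem ρ hcard v.2

end Representation

lemma CategoryTheory.Limits.IsZero.of_retract {C : Type*} [Category C]
    [Limits.HasZeroMorphisms C] {X Y : C} (hY : Limits.IsZero Y) (h : Retract X Y) :
    Limits.IsZero X :=
  hY.of_mono h.i

lemma IsCohomologicallyTrivial.of_retract {G : Type} [Group G] {M M' : Rep ℤ G}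
    (h : Retract M M') (hM' : IsCohomologicallyTrivial M') : IsCohomologicallyTrivial M :=
  fun H i hi =>
    (hM' H i hi).of_retract (h.map (Rep.resFunctor H.subtype ⋙ groupCohomology.functor ℤ H i))

theorem cyclicInvariants_cohomologicallyTrivial_general
    (ℓ : ℕ) (hℓ : ℓ.Prime) (G : Type) [Group G]
    (N : Type) [AddCommGroup N]
    (ρ : Representation ℤ (Multiplicative (ZMod ℓ) × G) N)
    (hinv : Function.Bijective fun n : N => (ℓ : ℤ) • n)
    (hct : IsCohomologicallyTrivial
      (Rep.of (MonoidHom.comp ρ (MonoidHom.inr (Multiplicative (ZMod ℓ)) G)))) :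
    IsCohomologicallyTrivial (Rep.of (fstInvariantsRep ρ)) := by
  have : NeZero ℓ := ⟨hℓ.ne_zero⟩
  have hcard : Function.Bijective fun n : N =>
      (Fintype.card (Multiplicative (ZMod ℓ)) : ℤ) • n := by
    rwa [Fintype.card_multiplicative, ZMod.card]
  exact hct.of_retract (Representation.fstInvariantsRetract ρ hcard)

/-- Let `ℓ` be a prime number and `G` a finite group whose order is not divisible by `ℓ`,
and let `C_ℓ = ℤ/ℓℤ`.  Let `N` be a module over `ℤ[1/ℓ][C_ℓ × G]` (formalized as a
`ℤ`-representation of `C_ℓ × G` on an abelian group `N` on which multiplication by `ℓ`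
is invertible) whose underlying `ℤ[G]`-module is cohomologically trivial.  Then the
submodule `N^{C_ℓ}` of `C_ℓ`-invariants is cohomologically trivial as a `ℤ[G]`-module. -/
theorem cyclicInvariants_cohomologicallyTrivial
    (ℓ : ℕ) (hℓ : ℓ.Prime) (G : Type) [Group G] [Finite G] (hord : ¬ ℓ ∣ Nat.card G)
    (N : Type) [AddCommGroup N]
    (ρ : Representation ℤ (Multiplicative (ZMod ℓ) × G) N)
    (hinv : Function.Bijective fun n : N => (ℓ : ℤ) • n)
    (hct : IsCohomologicallyTrivial
      (Rep.of (MonoidHom.comp ρ (MonoidHom.inr (Multiplicative (ZMod ℓ)) G)))) :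
    IsCohomologicallyTrivial (Rep.of (fstInvariantsRep ρ)) :=
  cyclicInvariants_cohomologicallyTrivial_general ℓ hℓ G N ρ hinv hct
end

section
/- Let ℓ be a prime number and G a finite group whose order is not divisible by ℓ. Suppose g ∈ G, a ∈ ℤ/ℓℤ, b ∈ (ℤ/ℓℤ)ˣ, and f : ℤ/ℓℤ → G satisfy g · f(x) = f(b·x + a) for all x ∈ ℤ/ℓℤ. Then g = 1. Equivalently, for the action of G × Γ on Maps(ℤ/ℓℤ, G) in which Γ (the group of invertible affine maps x ↦ b·x + a of ℤ/ℓℤ) acts by precomposition with the inverse map and G acts by left multiplication of values, the stabilizer of every element lies in {1} × Γ. -/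
/-!
Let `φ x = b * x + a`. Since `g * f x = f (φ x)`, iterating gives `g ^ n * f x = f (φ^[n] x)`,
so `g ^ n = 1` as soon as `φ^[n]` has a fixed point. For `n = ℓ` it always does: if `b ≠ 1` then
`φ` itself fixes `a / (1 - b)`, and if `b = 1` then `φ^[ℓ]` is translation by `ℓ • a = 0`.
Hence `g ^ ℓ = 1`, and `ℓ` is coprime to `|G|`.
-/

theorem pow_eq_one_of_semiconj_of_iterate_fixed {X G : Type*} [Monoid G] [IsRightCancelMul G]
    {f : X → G} {σ : X → X} {g : G} (hf : Function.Semiconj f σ (g * ·)) {n : ℕ} {x : X}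
    (hx : σ^[n] x = x) : g ^ n = 1 := by
  have h := hf.iterate_right n x
  rw [hx, mul_left_iterate] at h
  exact mul_eq_right.mp h.symm

theorem exists_affine_iterate_charP_fixed {K : Type*} [Field K] (p : ℕ) [CharP K p] (b a : K) :
    ∃ x, (fun y => b * y + a)^[p] x = x := by
  by_cases hb : b = 1
  · subst hb
    refine ⟨0, ?_⟩
    simp only [one_mul, add_right_iterate_apply, nsmul_eq_mul, CharP.cast_eq_zero, zero_mul,
      add_zero]
  · have hfixed : b * (a / (1 - b)) + a = a / (1 - b) := by
      field_simp [sub_ne_zero.mpr (Ne.symm hb)]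
      ring
    exact ⟨a / (1 - b), Function.iterate_fixed hfixed p⟩

theorem affine_stabilizer_trivial_general (ℓ : ℕ) (hℓ : ℓ.Prime) (G : Type) [Group G]
    (hord : ¬ ℓ ∣ Nat.card G) (g : G) (a : ZMod ℓ) (b : (ZMod ℓ)ˣ) (f : ZMod ℓ → G)
    (h : ∀ x : ZMod ℓ, g * f x = f ((b : ZMod ℓ) * x + a)) :
    g = 1 := by
  have := Fact.mk hℓ
  obtain ⟨x, hx⟩ := exists_affine_iterate_charP_fixed ℓ (b : ZMod ℓ) a
  have hpow : g ^ ℓ = 1 := pow_eq_one_of_semiconj_of_iterate_fixed (fun y => (h y).symm) hx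
  exact (pow_eq_one_iff_of_coprime (hℓ.coprime_iff_not_dvd.mpr hord)).mp ⟨hpow, pow_card_eq_one'⟩

/-- Let `ℓ` be a prime number and `G` a finite group whose order is not divisible by `ℓ`.
Suppose `g ∈ G`, `a ∈ ℤ/ℓℤ`, `b ∈ (ℤ/ℓℤ)ˣ` and `f : ℤ/ℓℤ → G` satisfy
`g · f(x) = f(b·x + a)` for all `x ∈ ℤ/ℓℤ`.  Then `g = 1`.  (Equivalently, for the
action of `G × Γ` on `Maps(ℤ/ℓℤ, G)`, where `Γ` is the group of invertible affine
transformations of `ℤ/ℓℤ`, the stabilizer of every element lies in `{1} × Γ`.) -/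
theorem affine_stabilizer_trivial (ℓ : ℕ) (hℓ : ℓ.Prime) (G : Type) [Group G] [Finite G]
    (hord : ¬ ℓ ∣ Nat.card G) (g : G) (a : ZMod ℓ) (b : (ZMod ℓ)ˣ) (f : ZMod ℓ → G)
    (h : ∀ x : ZMod ℓ, g * f x = f ((b : ZMod ℓ) * x + a)) :
    g = 1 :=
  affine_stabilizer_trivial_general ℓ hℓ G hord g a b f h
end

section
/- Let p be an odd prime and N ≥ 1 an integer. Then the set of prime numbers ℓ such that ℓ ≠ p, the image of ℓ in (ℤ/pℤ)ˣ generates (ℤ/pℤ)ˣ, and ℓ^{p-1} ≡ 1 (mod p^N), is infinite. -/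
/-!
Take a generator `g` of `(ℤ/pℤ)ˣ` and lift it to a unit `u` modulo `p ^ N`. Its Teichmüller
representative `a = u ^ p ^ (N - 1)` still reduces to `g` (Frobenius is the identity on `ℤ/pℤ`)
and satisfies `a ^ (p - 1) = 1`, because `p ^ (N - 1) * (p - 1) = φ (p ^ N)`. By Dirichlet's
theorem infinitely many primes are congruent to `a` modulo `p ^ N`, and each of them has both
properties.
-/

namespace ZMod

theorem exists_unitsMap_eq_and_pow_sub_one_eq_one {p N : ℕ} [Fact p.Prime] (hN : N ≠ 0)
    (g : (ZMod p)ˣ) :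
    ∃ a : (ZMod (p ^ N))ˣ, unitsMap (dvd_pow_self p hN) a = g ∧ a ^ (p - 1) = 1 := by
  have : NeZero (p ^ N) := ⟨pow_ne_zero N (Fact.out : p.Prime).ne_zero⟩
  obtain ⟨u, hu⟩ := unitsMap_surjective (dvd_pow_self p hN) g
  refine ⟨u ^ p ^ (N - 1), ?_, ?_⟩
  · rw [map_pow, hu]
    exact Units.ext (by push_cast; exact pow_card_pow _)
  · rw [← pow_mul, ← Nat.totient_prime_pow Fact.out (Nat.pos_of_ne_zero hN), pow_totient]

theorem natCast_eq_unitsMap_of_natCast_eq {m n : ℕ} (h : m ∣ n) {a : (ZMod n)ˣ} {k : ℕ}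
    (hk : (k : ZMod n) = a) : (k : ZMod m) = unitsMap h a := by
  rw [unitsMap_val, ← hk, cast_natCast h]

theorem exists_orderOf_eq_sub_one (p : ℕ) [Fact p.Prime] :
    ∃ g : (ZMod p)ˣ, orderOf g = p - 1 := by
  rw [← card_units p, ← Nat.card_eq_fintype_card]
  exact IsCyclic.exists_ofOrder_eq_natCard

end ZMod

theorem infinite_primes_generating_and_congruent_general (p : ℕ) (hp : p.Prime)
    (N : ℕ) (hN : 1 ≤ N) :
    {ℓ : ℕ | ℓ.Prime ∧ ℓ ≠ p ∧ orderOf (ℓ : ZMod p) = p - 1 ∧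
      ℓ ^ (p - 1) ≡ 1 [MOD p ^ N]}.Infinite := by
  have : Fact p.Prime := ⟨hp⟩
  have : NeZero (p ^ N) := ⟨pow_ne_zero N hp.ne_zero⟩
  obtain ⟨g, hg⟩ := ZMod.exists_orderOf_eq_sub_one p
  obtain ⟨a, hag, ha⟩ := ZMod.exists_unitsMap_eq_and_pow_sub_one_eq_one (by omega : N ≠ 0) g
  refine (Nat.infinite_setOfPred_prime_and_eq_mod a.isUnit).mono ?_
  rintro ℓ ⟨hℓ, hℓa⟩
  have hℓg : (ℓ : ZMod p) = g := hag ▸ ZMod.natCast_eq_unitsMap_of_natCast_eq _ hℓa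
  refine ⟨hℓ, ?_, by rw [hℓg, orderOf_units, hg], ?_⟩
  · rintro rfl
    exact g.ne_zero (by rw [← hℓg, ZMod.natCast_self])
  · rw [← ZMod.natCast_eq_natCast_iff, Nat.cast_pow, hℓa, ← Units.val_pow_eq_pow_val, ha,
      Units.val_one, Nat.cast_one]

/-- Let `p` be an odd prime and `N ≥ 1` an integer.  Then the set of prime numbers `ℓ`
such that `ℓ ≠ p`, the image of `ℓ` in `(ℤ/pℤ)ˣ` generates `(ℤ/pℤ)ˣ` (i.e. `ℓ mod p`
has multiplicative order `p - 1`), and `ℓ^(p-1) ≡ 1 (mod p^N)`, is infinite. -/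
theorem infinite_primes_generating_and_congruent (p : ℕ) (hp : p.Prime) (hodd : Odd p)
    (N : ℕ) (hN : 1 ≤ N) :
    {ℓ : ℕ | ℓ.Prime ∧ ℓ ≠ p ∧ orderOf (ℓ : ZMod p) = p - 1 ∧
      ℓ ^ (p - 1) ≡ 1 [MOD p ^ N]}.Infinite :=
  infinite_primes_generating_and_congruent_general p hp N hN
end
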